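/- Let 𝔤 be a finite-dimensional semisimple Lie algebra over ℂ with Killing form κ, and let 𝔞 ⊆ 𝔤 be a Cartan subalgebra (so that κ restricted to 𝔞 is nondegenerate). Let α, δ : 𝔞 → ℂ be linear functionals and let H_α, H_δ ∈ 𝔞 be their κ-duals, i.e. κ(H_α, h) = α(h) and κ(H_δ, h) = δ(h) for all h ∈ 𝔞. Let 𝔭 ⊆ 𝔤 be a Lie subalgebra containing the generalized weight space 𝔤_α, and let 𝔥 be an ideal of 𝔭 with H_δ ∈ 𝔥. If δ(H_α) ≠ 0, then 𝔤_α ⊆ 𝔥. -/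

import Mathlib

/-! Put `c = α(H_δ) = κ(H_α, H_δ) = δ(H_α) ≠ 0` and `S = ad H_δ - c`. Since `𝔥` is an ideal of
`𝔭` containing `H_δ`, `ad H_δ` maps `𝔭` into `𝔥`; so for `y ∈ 𝔭` with `S y ∈ 𝔥` we get
`c y = ad H_δ y - S y ∈ 𝔥`. As every `x ∈ 𝔤_α` is killed by a power of `S` and `S` preserves `𝔭`,
induction on that power gives `x ∈ 𝔥`. -/

def genWeightSet {𝔤 : Type*} [LieRing 𝔤] [LieAlgebra ℂ 𝔤]
    (𝔞 : LieSubalgebra ℂ 𝔤) (α : 𝔞 → ℂ) : Set 𝔤 :=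
  {x : 𝔤 | ∀ h : 𝔞, ∃ k : ℕ,
    ((LieAlgebra.ad ℂ 𝔤 (h : 𝔤) - α h • (1 : Module.End ℂ 𝔤)) ^ k) x = 0}

theorem Submodule.mem_of_pow_sub_smul_one_apply_eq_zero {K V : Type*} [Field K] [AddCommGroup V]
    [Module K V] {T : Module.End K V} {c : K} (hc : c ≠ 0) {p q : Submodule K V} (hqp : q ≤ p)
    (hT : ∀ y ∈ p, T y ∈ q) (n : ℕ) {y : V} (hy : y ∈ p) (hn : ((T - c • 1) ^ n) y = 0) :
    y ∈ q := by
  induction n generalizing y with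
  | zero => simp_all
  | succ n ih =>
    have hSy : (T - c • 1) y = T y - c • y := by simp
    have hSy_q : (T - c • 1) y ∈ q := by
      refine ih (hSy ▸ p.sub_mem (hqp (hT y hy)) (p.smul_mem c hy)) ?_
      rwa [← Module.End.mul_apply, ← pow_succ]
    have hcy : c • y ∈ q := by
      have : c • y = T y - (T - c • 1) y := by rw [hSy]; abel
      exact this ▸ q.sub_mem (hT y hy) hSy_q
    simpa [smul_smul, inv_mul_cancel₀ hc] using q.smul_mem c⁻¹ hcy

theorem LieSubalgebra.lie_mem_of_forall_lie_mem {R L : Type*} [CommRing R] [LieRing L]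
    [LieAlgebra R L] {p h : LieSubalgebra R L} (hideal : ∀ x ∈ p, ∀ y ∈ h, ⁅x, y⁆ ∈ h)
    {H : L} (hH : H ∈ h) {y : L} (hy : y ∈ p) : ⁅H, y⁆ ∈ h := by
  rw [← lie_skew]
  exact h.neg_mem (hideal y hy H hH)

theorem genWeightSet_subset_ideal_of_distortion_ne_zero_general
    {𝔤 : Type*} [LieRing 𝔤] [LieAlgebra ℂ 𝔤] [FiniteDimensional ℂ 𝔤]
    (𝔞 : LieSubalgebra ℂ 𝔤)
    (α δ : 𝔞 →ₗ[ℂ] ℂ) (Hα Hδ : 𝔞)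
    (hHα : ∀ h : 𝔞, killingForm ℂ 𝔤 (Hα : 𝔤) (h : 𝔤) = α h)
    (hHδ : ∀ h : 𝔞, killingForm ℂ 𝔤 (Hδ : 𝔤) (h : 𝔤) = δ h)
    (𝔭 : LieSubalgebra ℂ 𝔤)
    (hsub : genWeightSet 𝔞 α ⊆ (𝔭 : Set 𝔤))
    (𝔥 : LieSubalgebra ℂ 𝔤) (h𝔥𝔭 : 𝔥 ≤ 𝔭)
    (hideal : ∀ p ∈ 𝔭, ∀ x ∈ 𝔥, ⁅p, x⁆ ∈ 𝔥)
    (hHδ𝔥 : (Hδ : 𝔤) ∈ 𝔥)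
    (hδHα : δ Hα ≠ 0) :
    genWeightSet 𝔞 α ⊆ (𝔥 : Set 𝔤) := by
  have hαHδ : α Hδ ≠ 0 := by
    rwa [← hHα Hδ, LieModule.traceForm_comm, hHδ Hα]
  intro x hx
  obtain ⟨k, hk⟩ := hx Hδ
  exact Submodule.mem_of_pow_sub_smul_one_apply_eq_zero (p := 𝔭.toSubmodule) (q := 𝔥.toSubmodule)
    hαHδ h𝔥𝔭 (fun y hy ↦ LieSubalgebra.lie_mem_of_forall_lie_mem hideal hHδ𝔥 hy) k (hsub hx) hk

/-- Let `𝔤` be a finite-dimensional complex semisimple Lie algebra with Killing form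
`κ`, `𝔞` a Cartan subalgebra, `α, δ` linear functionals on `𝔞` with `κ`-duals
`Hα, Hδ ∈ 𝔞`.  If `𝔭` is a subalgebra containing the weight space `𝔤_α`, `𝔥` an ideal
of `𝔭` containing `Hδ`, and `δ (Hα) ≠ 0`, then `𝔤_α ⊆ 𝔥`. -/
theorem genWeightSet_subset_ideal_of_distortion_ne_zero
    {𝔤 : Type*} [LieRing 𝔤] [LieAlgebra ℂ 𝔤] [FiniteDimensional ℂ 𝔤]
    [LieAlgebra.IsSemisimple ℂ 𝔤]
    (𝔞 : LieSubalgebra ℂ 𝔤) [𝔞.IsCartanSubalgebra]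
    (α δ : 𝔞 →ₗ[ℂ] ℂ) (Hα Hδ : 𝔞)
    (hHα : ∀ h : 𝔞, killingForm ℂ 𝔤 (Hα : 𝔤) (h : 𝔤) = α h)
    (hHδ : ∀ h : 𝔞, killingForm ℂ 𝔤 (Hδ : 𝔤) (h : 𝔤) = δ h)
    (𝔭 : LieSubalgebra ℂ 𝔤)
    (hsub : genWeightSet 𝔞 α ⊆ (𝔭 : Set 𝔤))
    (𝔥 : LieSubalgebra ℂ 𝔤) (h𝔥𝔭 : 𝔥 ≤ 𝔭)
    (hideal : ∀ p ∈ 𝔭, ∀ x ∈ 𝔥, ⁅p, x⁆ ∈ 𝔥)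
    (hHδ𝔥 : (Hδ : 𝔤) ∈ 𝔥)
    (hδHα : δ Hα ≠ 0) :
    genWeightSet 𝔞 α ⊆ (𝔥 : Set 𝔤) :=
  genWeightSet_subset_ideal_of_distortion_ne_zero_general 𝔞 α δ Hα Hδ hHα hHδ 𝔭 hsub 𝔥 h𝔥𝔭 hideal
    hHδ𝔥 hδHα
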